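/- Let F be a field, G = SL₂(F), B the subgroup of upper triangular matrices in G, and T the diagonal torus. Then the (B,T) double cosets in G are exactly: B itself, B w T where w = [[0,1],[−1,0]], and the cosets B u_ε T where u_ε = [[1,0],[ε,1]], with u_ε and u_{ε'} in the same double coset if and only if ε/ε' is a square in F^×. In particular there are exactly 2 + |F^×/(F^×)²| double cosets. -/

import Mathlib

open Matrix
namespace Stmt13Aux
variable {F : Type*} [Field F]
local notation "SL2" => Matrix.SpecialLinearGroup (Fin 2) F

lemma det_eq (g : SL2) : g.1 0 0 * g.1 1 1 - g.1 0 1 * g.1 1 0 = 1 := by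
  have := g.2; rwa [Matrix.det_fin_two] at this

lemma mul10 (a b : SL2) : (a*b).1 1 0 = a.1 1 0 * b.1 0 0 + a.1 1 1 * b.1 1 0 := by
  simp [Matrix.mul_apply, Fin.sum_univ_two]

lemma mul11 (a b : SL2) : (a*b).1 1 1 = a.1 1 0 * b.1 0 1 + a.1 1 1 * b.1 1 1 := by
  simp [Matrix.mul_apply, Fin.sum_univ_two]

lemma mul01 (a b : SL2) : (a*b).1 0 1 = a.1 0 0 * b.1 0 1 + a.1 0 1 * b.1 1 1 := by
  simp [Matrix.mul_apply, Fin.sum_univ_two]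

lemma key10 (b x t : SL2) (hb : b.1 1 0 = 0) (ht : t.1 1 0 = 0) :
    (b*x*t).1 1 0 = b.1 1 1 * x.1 1 0 * t.1 0 0 := by
  rw [mul10, mul10, hb, ht]; ring

lemma key11 (b x t : SL2) (hb : b.1 1 0 = 0) (ht : t.1 0 1 = 0) :
    (b*x*t).1 1 1 = b.1 1 1 * x.1 1 1 * t.1 1 1 := by
  rw [mul11, mul10, mul11, hb, ht]; ring

lemma b11_ne (b : SL2) (hb : b.1 1 0 = 0) : b.1 1 1 ≠ 0 := by
  have h := det_eq b; rw [hb] at h; intro h0; rw [h0] at h; simp at h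

lemma t00_ne (t : SL2) (ht : t.1 1 0 = 0) : t.1 0 0 ≠ 0 := by
  have h := det_eq t; rw [ht] at h; intro h0; rw [h0] at h; simp at h

lemma t_diag_mul (t : SL2) (ht' : t.1 0 1 = 0) :
    t.1 0 0 * t.1 1 1 = 1 := by
  have h := det_eq t; rw [ht'] at h; linear_combination h

lemma t11_ne (t : SL2) (ht' : t.1 0 1 = 0) : t.1 1 1 ≠ 0 :=
  right_ne_zero_of_mul_eq_one (t_diag_mul t ht')

lemma B_mul (a b : SL2) (ha : a.1 1 0 = 0) (hb : b.1 1 0 = 0) : (a*b).1 1 0 = 0 := by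
  rw [mul10, ha, hb]; ring

lemma T_mul (a b : SL2) (ha : a.1 1 0 = 0 ∧ a.1 0 1 = 0) (hb : b.1 1 0 = 0 ∧ b.1 0 1 = 0) :
    (a*b).1 1 0 = 0 ∧ (a*b).1 0 1 = 0 := by
  constructor
  · rw [mul10, ha.1, hb.1]; ring
  · rw [mul01, ha.2, hb.2]; ring

lemma inv10 (a : SL2) : (a⁻¹).1 1 0 = -(a.1 1 0) := by
  have : ((a⁻¹ : SL2) : Matrix (Fin 2) (Fin 2) F) = a.1.adjugate :=
    Matrix.SpecialLinearGroup.coe_inv a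
  rw [this, Matrix.adjugate_fin_two]; simp

lemma inv01 (a : SL2) : (a⁻¹).1 0 1 = -(a.1 0 1) := by
  have : ((a⁻¹ : SL2) : Matrix (Fin 2) (Fin 2) F) = a.1.adjugate :=
    Matrix.SpecialLinearGroup.coe_inv a
  rw [this, Matrix.adjugate_fin_two]; simp

lemma inv00 (a : SL2) : (a⁻¹).1 0 0 = a.1 1 1 := by
  have : ((a⁻¹ : SL2) : Matrix (Fin 2) (Fin 2) F) = a.1.adjugate :=
    Matrix.SpecialLinearGroup.coe_inv a
  rw [this, Matrix.adjugate_fin_two]; simp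

end Stmt13Aux

open Stmt13Aux in
/-- The `(B,T)` double cosets in `SL₂(F)`: they are `B`, `B w T` with
`w = [[0,1],[−1,0]]`, and `B u_ε T` with `u_ε = [[1,0],[ε,1]]`, where
`B u_ε T = B u_{ε'} T` iff `ε/ε'` is a square; in particular there are exactly
`2 + |F^×/(F^×)²|` double cosets. -/
theorem stmt13 {F : Type*} [Field F] :
    let G := Matrix.SpecialLinearGroup (Fin 2) F
    let B : Set G := {g | (g : Matrix (Fin 2) (Fin 2) F) 1 0 = 0}
    let T : Set G := {g | (g : Matrix (Fin 2) (Fin 2) F) 1 0 = 0 ∧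
      (g : Matrix (Fin 2) (Fin 2) F) 0 1 = 0}
    let dc : G → Set G := fun x => {g | ∃ b ∈ B, ∃ t ∈ T, g = b * x * t}
    let w : G := ⟨!![0, 1; -1, 0], by simp [Matrix.det_fin_two_of]⟩
    let u : F → G := fun ε => ⟨!![1, 0; ε, 1], by simp [Matrix.det_fin_two_of]⟩
    (∀ g : G, g ∈ dc 1 ∨ g ∈ dc w ∨ ∃ ε : Fˣ, g ∈ dc (u ε)) ∧
    (dc 1 = B) ∧
    (dc 1 ∩ dc w = ∅) ∧
    (∀ ε : Fˣ, dc 1 ∩ dc (u ε) = ∅ ∧ dc w ∩ dc (u ε) = ∅) ∧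
    (∀ ε ε' : Fˣ, dc (u ε) = dc (u ε') ↔ ∃ c : Fˣ, (ε : F) = (ε' : F) * (c : F) ^ 2) ∧
    Cardinal.mk {S : Set G // ∃ x : G, S = dc x} =
      2 + Cardinal.mk (Fˣ ⧸ (powMonoidHom 2 : Fˣ →* Fˣ).range) := by
  intro G B T dc w u
  -- basic entry facts
  have hw10 : (w : Matrix (Fin 2) (Fin 2) F) 1 0 = -1 := by
    show (!![(0:F), 1; -1, 0]) 1 0 = -1; norm_num
  have hw11 : (w : Matrix (Fin 2) (Fin 2) F) 1 1 = 0 := by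
    show (!![(0:F), 1; -1, 0]) 1 1 = 0; norm_num
  have hu10 : ∀ ε : F, (u ε : Matrix (Fin 2) (Fin 2) F) 1 0 = ε := by
    intro ε; show (!![(1:F), 0; ε, 1]) 1 0 = ε; norm_num
  have hu11 : ∀ ε : F, (u ε : Matrix (Fin 2) (Fin 2) F) 1 1 = 1 := by
    intro ε; show (!![(1:F), 0; ε, 1]) 1 1 = 1; norm_num
  have h110 : ((1 : G) : Matrix (Fin 2) (Fin 2) F) 1 0 = 0 := by simp
  have h101 : ((1 : G) : Matrix (Fin 2) (Fin 2) F) 0 1 = 0 := by simp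
  have hB1 : (1 : G) ∈ B := h110
  have hT1 : (1 : G) ∈ T := ⟨h110, h101⟩
  have self_mem : ∀ x : G, x ∈ dc x := fun x =>
    ⟨1, hB1, 1, hT1, by group⟩
  have hBmul : ∀ a b : G, a ∈ B → b ∈ B → a * b ∈ B := fun a b ha hb => B_mul a b ha hb
  have hBinv : ∀ a : G, a ∈ B → a⁻¹ ∈ B := fun a ha => by
    show (a⁻¹).1 1 0 = 0; rw [inv10, ha]; ring
  have hTmul : ∀ a b : G, a ∈ T → b ∈ T → a * b ∈ T := fun a b ha hb => T_mul a b ha hb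
  have hTinv : ∀ a : G, a ∈ T → a⁻¹ ∈ T := fun a ha => by
    refine ⟨?_, ?_⟩
    · show (a⁻¹).1 1 0 = 0; rw [inv10, ha.1]; ring
    · show (a⁻¹).1 0 1 = 0; rw [inv01, ha.2]; ring
  -- dc x = dc y when y ∈ dc x
  have dc_eq_of_mem : ∀ x y : G, y ∈ dc x → dc x = dc y := by
    rintro x y ⟨b, hb, t, ht, hy⟩
    ext g
    constructor
    · rintro ⟨b', hb', t', ht', rfl⟩
      refine ⟨b' * b⁻¹, hBmul _ _ hb' (hBinv _ hb), t⁻¹ * t', hTmul _ _ (hTinv _ ht) ht', ?_⟩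
      rw [hy]; simp only [mul_assoc]; rw [mul_inv_cancel_left t t', inv_mul_cancel_left b]
    · rintro ⟨b', hb', t', ht', rfl⟩
      refine ⟨b' * b, hBmul _ _ hb' hb, t * t', hTmul _ _ ht ht', ?_⟩
      rw [hy]; group
  -- invariants of membership
  have mem1_10 : ∀ g : G, g ∈ dc 1 → (g : Matrix (Fin 2) (Fin 2) F) 1 0 = 0 := by
    rintro g ⟨b, hb, t, ht, rfl⟩
    rw [show ((b*1*t : G) : Matrix (Fin 2) (Fin 2) F) 1 0 = (b*1*t).1 1 0 from rfl,
      key10 b 1 t hb ht.1, h110]; ring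
  have memw_10 : ∀ g : G, g ∈ dc w → (g : Matrix (Fin 2) (Fin 2) F) 1 0 ≠ 0 := by
    rintro g ⟨b, hb, t, ht, rfl⟩
    rw [show ((b*w*t : G) : Matrix (Fin 2) (Fin 2) F) 1 0 = (b*w*t).1 1 0 from rfl,
      key10 b w t hb ht.1, hw10]
    exact mul_ne_zero (mul_ne_zero (b11_ne b hb) (by norm_num)) (t00_ne t ht.1)
  have memw_11 : ∀ g : G, g ∈ dc w → (g : Matrix (Fin 2) (Fin 2) F) 1 1 = 0 := by
    rintro g ⟨b, hb, t, ht, rfl⟩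
    rw [show ((b*w*t : G) : Matrix (Fin 2) (Fin 2) F) 1 1 = (b*w*t).1 1 1 from rfl,
      key11 b w t hb ht.2, hw11]; ring
  have memu_10 : ∀ (ε : Fˣ) (g : G), g ∈ dc (u ε) →
      (g : Matrix (Fin 2) (Fin 2) F) 1 0 ≠ 0 := by
    rintro ε g ⟨b, hb, t, ht, rfl⟩
    rw [show ((b*(u ε)*t : G) : Matrix (Fin 2) (Fin 2) F) 1 0 = (b*(u ε)*t).1 1 0 from rfl,
      key10 b (u ε) t hb ht.1, hu10]
    exact mul_ne_zero (mul_ne_zero (b11_ne b hb) ε.ne_zero) (t00_ne t ht.1)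
  have memu_11 : ∀ (ε : Fˣ) (g : G), g ∈ dc (u ε) →
      (g : Matrix (Fin 2) (Fin 2) F) 1 1 ≠ 0 := by
    rintro ε g ⟨b, hb, t, ht, rfl⟩
    rw [show ((b*(u ε)*t : G) : Matrix (Fin 2) (Fin 2) F) 1 1 = (b*(u ε)*t).1 1 1 from rfl,
      key11 b (u ε) t hb ht.2, hu11]
    exact mul_ne_zero (mul_ne_zero (b11_ne b hb) one_ne_zero) (t11_ne t ht.2)
  have memu_prod : ∀ (ε : Fˣ) (g : G), g ∈ dc (u ε) →
      ∃ c : F, c ≠ 0 ∧ (g : Matrix (Fin 2) (Fin 2) F) 1 0 *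
        (g : Matrix (Fin 2) (Fin 2) F) 1 1 = (ε : F) * c ^ 2 := by
    rintro ε g ⟨b, hb, t, ht, rfl⟩
    refine ⟨b.1 1 1, b11_ne b hb, ?_⟩
    rw [show ((b*(u ε)*t : G) : Matrix (Fin 2) (Fin 2) F) 1 0 = (b*(u ε)*t).1 1 0 from rfl,
      show ((b*(u ε)*t : G) : Matrix (Fin 2) (Fin 2) F) 1 1 = (b*(u ε)*t).1 1 1 from rfl,
      key10 b (u ε) t hb ht.1, key11 b (u ε) t hb ht.2, hu10, hu11]
    have htt := t_diag_mul t ht.2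
    linear_combination (ε : F) * (b.1 1 1)^2 * htt
  -- trichotomy
  have tri : ∀ g : G, g ∈ dc 1 ∨ g ∈ dc w ∨ ∃ ε : Fˣ, g ∈ dc (u ε) := by
    intro g
    by_cases h10 : (g : Matrix (Fin 2) (Fin 2) F) 1 0 = 0
    · exact Or.inl ⟨g, h10, 1, hT1, by group⟩
    by_cases h11 : (g : Matrix (Fin 2) (Fin 2) F) 1 1 = 0
    · refine Or.inr (Or.inl ⟨g * w⁻¹, ?_, 1, hT1, by rw [mul_one, inv_mul_cancel_right]⟩)
      show (g * w⁻¹).1 1 0 = 0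
      rw [mul10, inv00, inv10, hw10, hw11, h11]; ring
    · refine Or.inr (Or.inr ?_)
      set c := (g : Matrix (Fin 2) (Fin 2) F) 1 0 with hc
      set d := (g : Matrix (Fin 2) (Fin 2) F) 1 1 with hd
      refine ⟨Units.mk0 (c * d) (mul_ne_zero h10 h11), ?_⟩
      have hdet_t : (!![d⁻¹, 0; 0, d] : Matrix (Fin 2) (Fin 2) F).det = 1 := by
        rw [Matrix.det_fin_two_of]; field_simp; ring
      have hdet_ti : (!![d, 0; 0, d⁻¹] : Matrix (Fin 2) (Fin 2) F).det = 1 := by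
        rw [Matrix.det_fin_two_of]; field_simp; ring
      have hdet_ui : (!![1, 0; -(c*d), 1] : Matrix (Fin 2) (Fin 2) F).det = 1 := by
        rw [Matrix.det_fin_two_of]; ring
      set t : G := ⟨!![d⁻¹, 0; 0, d], hdet_t⟩ with htdef
      set ti : G := ⟨!![d, 0; 0, d⁻¹], hdet_ti⟩ with htidef
      set ui : G := ⟨!![1, 0; -(c*d), 1], hdet_ui⟩ with huidef
      have hti_t : ti * t = 1 := by
        apply Subtype.ext
        show (!![d, 0; 0, d⁻¹] : Matrix (Fin 2) (Fin 2) F) * !![d⁻¹, 0; 0, d] = 1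
        ext i j; fin_cases i <;> fin_cases j <;>
          simp [Matrix.mul_apply, Fin.sum_univ_two] <;> field_simp
      have hui_u : ui * u (c * d) = 1 := by
        apply Subtype.ext
        show (!![1, 0; -(c*d), 1] : Matrix (Fin 2) (Fin 2) F) * !![1, 0; c*d, 1] = 1
        ext i j; fin_cases i <;> fin_cases j <;>
          simp [Matrix.mul_apply, Fin.sum_univ_two]
      refine ⟨g * ti * ui, ?_, t, ⟨?_, ?_⟩, ?_⟩
      · show (g * ti * ui).1 1 0 = 0
        rw [mul10, mul10, mul11]
        show (c * (ti.1 0 0) + d * (ti.1 1 0)) * (ui.1 0 0) +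
          (c * (ti.1 0 1) + d * (ti.1 1 1)) * (ui.1 1 0) = 0
        show (c * d + d * 0) * 1 + (c * 0 + d * d⁻¹) * (-(c*d)) = 0
        field_simp; ring
      · show (t.1 : Matrix (Fin 2) (Fin 2) F) 1 0 = 0
        show (!![d⁻¹, 0; 0, d] : Matrix (Fin 2) (Fin 2) F) 1 0 = 0; norm_num
      · show (!![d⁻¹, 0; 0, d] : Matrix (Fin 2) (Fin 2) F) 0 1 = 0; norm_num
      · show g = g * ti * ui * u (Units.mk0 (c * d) (mul_ne_zero h10 h11) : Fˣ) * t
        calc g = g * (ti * t) := by rw [hti_t]; group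
        _ = g * ti * (ui * u (c*d)) * t := by rw [hui_u]; group
        _ = g * ti * ui * u (c*d) * t := by group
  -- the iff over Fˣ
  have iffU : ∀ ε ε' : Fˣ, dc (u ε) = dc (u ε') ↔
      ∃ c : Fˣ, (ε : F) = (ε' : F) * (c : F) ^ 2 := by
    intro ε ε'
    constructor
    · intro h
      have hm : u (ε : F) ∈ dc (u ε') := by rw [← h]; exact self_mem _
      obtain ⟨c, hc0, hcc⟩ := memu_prod ε' _ hm
      rw [hu10, hu11] at hcc
      exact ⟨Units.mk0 c hc0, by simpa using hcc⟩
    · rintro ⟨c, hc⟩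
      symm
      apply dc_eq_of_mem
      have hdet_d1 : (!![(c:F), 0; 0, (c:F)⁻¹] : Matrix (Fin 2) (Fin 2) F).det = 1 := by
        rw [Matrix.det_fin_two_of]; field_simp; ring
      have hdet_d2 : (!![(c:F)⁻¹, 0; 0, (c:F)] : Matrix (Fin 2) (Fin 2) F).det = 1 := by
        rw [Matrix.det_fin_two_of]; field_simp; ring
      refine ⟨⟨_, hdet_d2⟩, ?_, ⟨_, hdet_d1⟩, ⟨?_, ?_⟩, ?_⟩
      · show (!![(c:F)⁻¹, 0; 0, (c:F)] : Matrix (Fin 2) (Fin 2) F) 1 0 = 0; norm_num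
      · show (!![(c:F), 0; 0, (c:F)⁻¹] : Matrix (Fin 2) (Fin 2) F) 1 0 = 0; norm_num
      · show (!![(c:F), 0; 0, (c:F)⁻¹] : Matrix (Fin 2) (Fin 2) F) 0 1 = 0; norm_num
      · apply Subtype.ext
        show (!![(1:F), 0; (ε:F), 1]) =
          (!![(c:F)⁻¹, 0; 0, (c:F)] : Matrix (Fin 2) (Fin 2) F) *
            !![(1:F), 0; (ε':F), 1] * !![(c:F), 0; 0, (c:F)⁻¹]
        have hcne : (c : F) ≠ 0 := c.ne_zero
        ext i j; fin_cases i <;> fin_cases j <;>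
          simp [Matrix.mul_apply, Fin.sum_univ_two] <;>
          (try field_simp) <;> (try linear_combination hc) <;> (try ring)
  -- disjointness
  have d1w : dc 1 ∩ dc w = ∅ := by
    rw [Set.eq_empty_iff_forall_notMem]
    rintro g ⟨h1, h2⟩
    exact memw_10 g h2 (mem1_10 g h1)
  have d1u : ∀ ε : Fˣ, dc 1 ∩ dc (u ε) = ∅ := by
    intro ε
    rw [Set.eq_empty_iff_forall_notMem]
    rintro g ⟨h1, h2⟩
    exact memu_10 ε g h2 (mem1_10 g h1)
  have dwu : ∀ ε : Fˣ, dc w ∩ dc (u ε) = ∅ := by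
    intro ε
    rw [Set.eq_empty_iff_forall_notMem]
    rintro g ⟨h1, h2⟩
    exact memu_11 ε g h2 (memw_11 g h1)
  refine ⟨tri, ?_, d1w, fun ε => ⟨d1u ε, dwu ε⟩, iffU, ?_⟩
  · ext g
    constructor
    · exact mem1_10 g
    · intro hg; exact ⟨g, hg, 1, hT1, by group⟩
  -- cardinality
  · set H := (powMonoidHom 2 : Fˣ →* Fˣ).range with hH
    have n1w : dc 1 ≠ dc w := fun h =>
      Set.notMem_empty w (d1w ▸ Set.mem_inter (h ▸ self_mem w) (self_mem w))
    have n1u : ∀ ε : Fˣ, dc 1 ≠ dc (u ε) := fun ε h =>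
      Set.notMem_empty (u ε) (d1u ε ▸ Set.mem_inter (h ▸ self_mem (u ε)) (self_mem (u ε)))
    have nwu : ∀ ε : Fˣ, dc w ≠ dc (u ε) := fun ε h =>
      Set.notMem_empty (u ε) (dwu ε ▸ Set.mem_inter (h ▸ self_mem (u ε)) (self_mem (u ε)))
    have wd : ∀ a b : Fˣ, (QuotientGroup.leftRel H).r a b →
        (⟨dc (u a), u a, rfl⟩ : {S : Set G // ∃ x : G, S = dc x}) = ⟨dc (u b), u b, rfl⟩ := by
      intro a b hab
      rw [QuotientGroup.leftRel_apply] at hab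
      obtain ⟨k, hk⟩ := hab
      have hk2 : (a⁻¹ * b : Fˣ) = k ^ 2 := by
        rw [← hk]; rfl
      have hk' : (b : F) = (a : F) * (k : F) ^ 2 := by
        have hb : b = a * k ^ 2 := by rw [← hk2]; group
        rw [hb]; push_cast; ring
      exact Subtype.ext ((iffU b a).mpr ⟨k, hk'⟩).symm
    let f : Option (Option (Fˣ ⧸ H)) → {S : Set G // ∃ x : G, S = dc x} := fun o =>
      match o with
      | none => ⟨dc 1, 1, rfl⟩
      | some none => ⟨dc w, w, rfl⟩
      | some (some q) => Quotient.liftOn' q (fun ε => ⟨dc (u ε), u ε, rfl⟩) wd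
    have hbij : Function.Bijective f := by
      constructor
      · intro o1 o2 h
        match o1, o2 with
        | none, none => rfl
        | none, some none => exact absurd (congrArg Subtype.val h) n1w
        | none, some (some q) =>
          obtain ⟨a⟩ := q
          exact absurd (congrArg Subtype.val h) (n1u a)
        | some none, none => exact absurd (congrArg Subtype.val h).symm n1w
        | some none, some none => rfl
        | some none, some (some q) =>
          obtain ⟨a⟩ := q
          exact absurd (congrArg Subtype.val h) (nwu a)
        | some (some q), none =>
          obtain ⟨a⟩ := q
          exact absurd (congrArg Subtype.val h).symm (n1u a)
        | some (some q), some none =>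
          obtain ⟨a⟩ := q
          exact absurd (congrArg Subtype.val h).symm (nwu a)
        | some (some q), some (some q') =>
          obtain ⟨a⟩ := q
          obtain ⟨b⟩ := q'
          obtain ⟨c, hc⟩ := (iffU a b).mp (congrArg Subtype.val h)
          have haU : a = b * c ^ 2 := Units.ext (by push_cast; exact hc)
          have hmem : a⁻¹ * b ∈ H := ⟨c⁻¹, by
            show c⁻¹ ^ 2 = a⁻¹ * b
            rw [haU]; group⟩
          have : (Quot.mk _ a : Fˣ ⧸ H) = Quot.mk _ b :=
            Quotient.sound' (QuotientGroup.leftRel_apply.mpr hmem)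
          rw [this]
      · rintro ⟨S, x, rfl⟩
        rcases tri x with hx | hx | ⟨ε, hx⟩
        · exact ⟨none, Subtype.ext (dc_eq_of_mem 1 x hx)⟩
        · exact ⟨some none, Subtype.ext (dc_eq_of_mem w x hx)⟩
        · exact ⟨some (some (Quotient.mk'' ε)), Subtype.ext (dc_eq_of_mem (u ε) x hx)⟩
    have hcongr := Cardinal.mk_congr (Equiv.ofBijective f hbij)
    rw [← hcongr, Cardinal.mk_option, Cardinal.mk_option]
    ring
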